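/- arXiv:2402.11222 — 2 statements merged into one kernel-verified Lean document; each statement's English description precedes it below -/
import Mathlib

section
/- Let d ≥ 2 and q ≥ 3 be integers, let G be a connected K_{1,d}-free graph with no induced cycle of length at least q, let h ≥ q−1 be an integer, let P be an induced path on at least h vertices in G, and let (B, β) be the h-backbone structure of P in G. Then (B, β) is a path decomposition of G[N[V(P)]] with independence number at most (d−1)h. -/
/-
Common definitions: tree decompositions, tree-independence number, treewidth,
independence/clique numbers, induced-subgraph freeness, and the special graphs
appearing in the paper "Treewidth versus clique number: induced minors,
distance to block graphs ... (tree-independence number)".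
-/

namespace PaperTIN

open SimpleGraph

variable {V W : Type}

/-- A set of vertices is independent if no two of its members are adjacent. -/
def IsIndepSet (G : SimpleGraph V) (s : Set V) : Prop :=
  s.Pairwise fun u v => ¬ G.Adj u v

/-- The maximum size of an independent set of `G` contained in `s`,
i.e. the independence number `α(G[s])` of the induced subgraph `G[s]`. -/
noncomputable def indepNumOn (G : SimpleGraph V) (s : Set V) : ℕ :=
  sSup {n | ∃ t : Finset V, ↑t ⊆ s ∧ IsIndepSet G ↑t ∧ t.card = n}

/-- The independence number `α(G)`. -/
noncomputable def indepNum (G : SimpleGraph V) : ℕ :=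
  indepNumOn G Set.univ

/-- The maximum size of a clique of `G` contained in `s`,
i.e. the clique number `ω(G[s])` of the induced subgraph `G[s]`. -/
noncomputable def cliqueNumOn (G : SimpleGraph V) (s : Set V) : ℕ :=
  sSup {n | ∃ t : Finset V, ↑t ⊆ s ∧ G.IsClique ↑t ∧ t.card = n}

/-- A tree decomposition of a graph `G`: a tree together with a bag for each node,
such that every vertex is in some bag, both endpoints of every edge lie in a common
bag, and for every vertex the set of nodes whose bag contains it induces a connected
(hence nonempty) subtree of the tree. -/
structure TreeDecomp {V : Type} (G : SimpleGraph V) where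
  ι : Type
  tree : SimpleGraph ι
  isTree : tree.IsTree
  bag : ι → Set V
  bag_vert : ∀ v : V, ∃ t : ι, v ∈ bag t
  bag_edge : ∀ ⦃u v : V⦄, G.Adj u v → ∃ t : ι, u ∈ bag t ∧ v ∈ bag t
  bag_conn : ∀ v : V, (tree.induce {t : ι | v ∈ bag t}).Connected

/-- The independence number of a tree decomposition: the maximum, over all bags,
of the independence number of the subgraph induced by the bag. -/
noncomputable def TreeDecomp.alpha {G : SimpleGraph V} (D : TreeDecomp G) : ℕ :=
  sSup {n | ∃ t : D.ι, n = indepNumOn G (D.bag t)}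

/-- The tree-independence number `tree-α(G)`: the minimum independence number of a
tree decomposition of `G`. -/
noncomputable def treeIndepNum (G : SimpleGraph V) : ℕ :=
  sInf {n | ∃ D : TreeDecomp G, D.alpha = n}

/-- The width of a tree decomposition: maximum bag size minus one. -/
noncomputable def TreeDecomp.width {G : SimpleGraph V} (D : TreeDecomp G) : ℕ :=
  sSup {n | ∃ t : D.ι, n = (D.bag t).ncard} - 1

/-- The treewidth `tw(G)`: the minimum width of a tree decomposition of `G`. -/
noncomputable def treewidth (G : SimpleGraph V) : ℕ :=
  sInf {n | ∃ D : TreeDecomp G, D.width = n}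

/-- `Free H G` means that `G` has no induced subgraph isomorphic to `H`
(equivalently, there is no graph embedding of `H` into `G`). -/
def Free (H : SimpleGraph W) (G : SimpleGraph V) : Prop :=
  IsEmpty (H ↪g G)

/-- The star `K_{1,d}` with `d` leaves. -/
def star (d : ℕ) : SimpleGraph (Fin 1 ⊕ Fin d) :=
  completeBipartiteGraph (Fin 1) (Fin d)

/-- The complete bipartite graph `K_{m,n}`. -/
def biclique (m n : ℕ) : SimpleGraph (Fin m ⊕ Fin n) :=
  completeBipartiteGraph (Fin m) (Fin n)

/-- The open neighborhood `N(X)` of a set of vertices: all vertices having a neighbor in `X`. -/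
def nbhdSet (G : SimpleGraph V) (X : Set V) : Set V :=
  {v | ∃ x ∈ X, G.Adj x v}

/-- The closed neighborhood `N[X]` of a set of vertices. -/
def closedNbhdSet (G : SimpleGraph V) (X : Set V) : Set V :=
  X ∪ nbhdSet G X

/-- `S_p`: the tree obtained from the claw `K_{1,3}` by subdividing each edge exactly
`p-1` times; equivalently a spider with three legs, each a path on `p` vertices,
attached to a center vertex. -/
def spider (p : ℕ) : SimpleGraph (Unit ⊕ Fin 3 × Fin p) :=
  SimpleGraph.fromRel fun a b =>
    (∃ j : Fin 3, ∃ i : Fin p, a = Sum.inl () ∧ b = Sum.inr (j, i) ∧ (i : ℕ) = 0) ∨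
    (∃ j : Fin 3, ∃ i i' : Fin p, a = Sum.inr (j, i) ∧ b = Sum.inr (j, i') ∧
      (i' : ℕ) = (i : ℕ) + 1)

/-- The disjoint union of `k` copies of a graph `H`. -/
def kCopies (k : ℕ) (H : SimpleGraph W) : SimpleGraph (Fin k × W) where
  Adj a b := a.1 = b.1 ∧ H.Adj a.2 b.2
  symm := ⟨by rintro a b ⟨h1, h2⟩; exact ⟨h1.symm, h2.symm⟩⟩
  loopless := ⟨by rintro a ⟨-, h⟩; exact H.loopless.irrefl _ h⟩

/-- Membership in the family `𝒮`: every connected component is a tree with at most three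
leaves. Equivalently, the graph is a forest and each connected component contains at most
three vertices of degree one. -/
def InS [Fintype W] (S : SimpleGraph W) : Prop :=
  S.IsAcyclic ∧ ∀ c : S.ConnectedComponent,
    {v : W | S.connectedComponentMk v = c ∧ (S.neighborSet v).ncard = 1}.ncard ≤ 3

/-- Membership in the family `L(𝒮)`: the graph is isomorphic to the line graph of some
member of `𝒮`. -/
def InLS [Fintype V] (T : SimpleGraph V) : Prop :=
  ∃ (W : Type) (_ : Fintype W) (S : SimpleGraph W),
    InS S ∧ Nonempty (T ≃g S.lineGraph)

/-- The induced biclique number of `G`: the largest `n` such that `G` contains an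
induced subgraph isomorphic to `K_{n,n}`. -/
noncomputable def ibn (G : SimpleGraph V) : ℕ :=
  sSup {n | Nonempty (completeBipartiteGraph (Fin n) (Fin n) ↪g G)}

/-- The `i`-th bag (0-indexed) of the `h`-backbone structure of an induced path
`f : P_ℓ ↪g G`: the closed neighborhood of the set of vertices
`{v_i, …, v_{i+h-1}}` of the path. -/
def backboneBag (G : SimpleGraph V) {ℓ : ℕ} (f : pathGraph ℓ ↪g G) (h i : ℕ) : Set V :=
  closedNbhdSet G (⇑f '' {j : Fin ℓ | i ≤ (j : ℕ) ∧ (j : ℕ) ≤ i + h - 1})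

/-- The vertex set (as a set of vertices of the ambient graph) of a connected component
of the induced subgraph `G[s]`. -/
def componentVerts {G : SimpleGraph V} {s : Set V}
    (C : (G.induce s).ConnectedComponent) : Set V :=
  Subtype.val '' {w : s | (G.induce s).connectedComponentMk w = C}

/-!
A bag `β(b_i)` consists of the vertices dominated by the window `v_i … v_{i+h-1}` of the path.
If a vertex lay in two bags but not in a bag between them, its dominators closest to the missed
window on either side would close, with the subpath between them, an induced cycle of length at
least `h + 3`. Likewise, if the closest dominators `v_a` of `u` and `v_b` of `v` for an edge `uv`
were `h` or more apart, `v_a … v_b v u` would be an induced cycle of length at least `h + 3`. Both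
are excluded because `h ≥ q - 1`. Finally, in a `K_{1,d}`-free graph an independent set inside
`N[x]` has at most `d - 1` vertices, and each bag is covered by `h` such neighbourhoods.
-/

section InducedPathsAndCycles

variable {G : SimpleGraph V}

theorem cycleGraph_adj_iff_val {n : ℕ} {u v : Fin (n + 2)} :
    (cycleGraph (n + 2)).Adj u v ↔ (u : ℕ) + 1 = v ∨ (v : ℕ) + 1 = u ∨
      ((u : ℕ) = 0 ∧ (v : ℕ) = n + 1) ∨ ((v : ℕ) = 0 ∧ (u : ℕ) = n + 1) := by
  simp only [cycleGraph_adj, sub_eq_iff_eq_add', Fin.ext_iff, Fin.val_add_one,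
    Fin.val_last]
  split_ifs <;> omega

theorem cycleGraph_adj_castSucc {n : ℕ} {i j : Fin (n + 1)} :
    (cycleGraph (n + 2)).Adj i.castSucc j.castSucc ↔ (pathGraph (n + 1)).Adj i j := by
  simp only [cycleGraph_adj_iff_val, pathGraph_adj, Fin.val_castSucc]
  omega

theorem cycleGraph_adj_castSucc_last {n : ℕ} {i : Fin (n + 1)} :
    (cycleGraph (n + 2)).Adj i.castSucc (Fin.last (n + 1)) ↔ (i : ℕ) = 0 ∨ (i : ℕ) = n := by
  simp only [cycleGraph_adj_iff_val, Fin.val_castSucc, Fin.val_last, and_true]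
  have := i.isLt
  omega

theorem pathGraph_adj_castSucc {n : ℕ} {i j : Fin n} :
    (pathGraph (n + 1)).Adj i.castSucc j.castSucc ↔ (pathGraph n).Adj i j := by
  simp only [pathGraph_adj, Fin.val_castSucc]

theorem pathGraph_adj_castSucc_last {n : ℕ} {i : Fin n} :
    (pathGraph (n + 1)).Adj i.castSucc (Fin.last n) ↔ (i : ℕ) + 1 = n := by
  simp only [pathGraph_adj, Fin.val_castSucc, Fin.val_last]
  omega

def pathSnoc {n : ℕ} (p : pathGraph n ↪g G) (w : V) (hw : w ∉ Set.range p)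
    (hadj : ∀ i, G.Adj (p i) w ↔ (i : ℕ) + 1 = n) : pathGraph (n + 1) ↪g G where
  toFun := Fin.snoc (α := fun _ => V) p w
  inj' := Fin.snoc_injective_of_injective p.injective hw
  map_rel_iff' {i j} := by
    induction i using Fin.lastCases <;> induction j using Fin.lastCases <;>
      simp [pathGraph_adj_castSucc, pathGraph_adj_castSucc_last, hadj, G.adj_comm w,
        (pathGraph _).adj_comm (Fin.last _)]

@[simp]
theorem pathSnoc_castSucc {n : ℕ} (p : pathGraph n ↪g G) (w : V) (hw) (hadj) (i : Fin n) :
    pathSnoc p w hw hadj i.castSucc = p i :=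
  Fin.snoc_castSucc (α := fun _ => V) ..

@[simp]
theorem pathSnoc_last {n : ℕ} (p : pathGraph n ↪g G) (w : V) (hw) (hadj) :
    pathSnoc p w hw hadj (Fin.last n) = w :=
  Fin.snoc_last (α := fun _ => V) ..

theorem nonempty_cycleGraph_embedding_of_pathGraph {n : ℕ} (p : pathGraph (n + 1) ↪g G) {w : V}
    (hw : w ∉ Set.range p) (hadj : ∀ i, G.Adj (p i) w ↔ (i : ℕ) = 0 ∨ (i : ℕ) = n) :
    Nonempty (cycleGraph (n + 2) ↪g G) := by
  refine ⟨⟨⟨Fin.snoc (α := fun _ => V) p w, Fin.snoc_injective_of_injective p.injective hw⟩, ?_⟩⟩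
  intro i j
  induction i using Fin.lastCases <;> induction j using Fin.lastCases <;>
    simp [cycleGraph_adj_castSucc, cycleGraph_adj_castSucc_last, hadj, G.adj_comm w,
      (cycleGraph _).adj_comm (Fin.last _)]

def pathGraphSegment {ℓ : ℕ} (a n : ℕ) (h : a + n < ℓ) : pathGraph (n + 1) ↪g pathGraph ℓ where
  toFun i := ⟨a + i, by omega⟩
  inj' i j hij := by simpa [Fin.ext_iff] using hij
  map_rel_iff' {i j} := by
    change (pathGraph ℓ).Adj ⟨a + i, _⟩ ⟨a + j, _⟩ ↔ _
    simp only [pathGraph_adj]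
    omega

@[simp]
theorem pathGraphSegment_val {ℓ a n : ℕ} (h : a + n < ℓ) (i : Fin (n + 1)) :
    (pathGraphSegment a n h i : ℕ) = a + i :=
  rfl

end InducedPathsAndCycles

section CyclesAlongPath

variable {G : SimpleGraph V} {ℓ : ℕ} (f : pathGraph ℓ ↪g G)

theorem adj_of_val_add_one_eq {i j : Fin ℓ} (h : (i : ℕ) + 1 = j) : G.Adj (f i) (f j) :=
  f.map_adj_iff.2 (pathGraph_adj.2 (Or.inl h))

theorem nonempty_cycleGraph_embedding_of_gap {w : V} {a b : Fin ℓ} (hab : (a : ℕ) + 2 ≤ b)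
    (ha : f a = w ∨ G.Adj (f a) w) (hb : f b = w ∨ G.Adj (f b) w)
    (hgap : ∀ m : Fin ℓ, (a : ℕ) < m → (m : ℕ) < b → ¬(f m = w ∨ G.Adj (f m) w)) :
    Nonempty (cycleGraph ((b : ℕ) - a + 2) ↪g G) := by
  -- if `w` were an end of the segment, its neighbour inside the segment would dominate `w`
  have ha' : G.Adj (f a) w := ha.resolve_left fun h =>
    hgap ⟨a + 1, by omega⟩ (by simp) (by simp; omega)
      (Or.inr (h ▸ (adj_of_val_add_one_eq f (j := ⟨a + 1, by omega⟩) rfl).symm))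
  have hb' : G.Adj (f b) w := hb.resolve_left fun h =>
    hgap ⟨b - 1, by omega⟩ (by simp; omega) (by simp; omega)
      (Or.inr (h ▸ adj_of_val_add_one_eq f (i := ⟨b - 1, by omega⟩) (by simp; omega)))
  have hseg : ∀ m : Fin ℓ, (a : ℕ) ≤ m → (m : ℕ) ≤ b →
      f m ≠ w ∧ (G.Adj (f m) w ↔ (m : ℕ) = a ∨ (m : ℕ) = b) := by
    intro m ham hmb
    by_cases hma : (m : ℕ) = a
    · obtain rfl : m = a := Fin.ext hma
      exact ⟨ha'.ne, iff_of_true ha' (Or.inl rfl)⟩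
    by_cases hmb' : (m : ℕ) = b
    · obtain rfl : m = b := Fin.ext hmb'
      exact ⟨hb'.ne, iff_of_true hb' (Or.inr rfl)⟩
    have := hgap m (by omega) (by omega)
    exact ⟨fun h => this (Or.inl h), iff_of_false (fun h => this (Or.inr h)) (by omega)⟩
  let p := f.comp (pathGraphSegment a (b - a) (by omega))
  refine nonempty_cycleGraph_embedding_of_pathGraph p (w := w) ?_ fun i => ?_
  · rintro ⟨i, hi⟩
    exact (hseg _ (by simp) (by simp; omega)).1 hi
  · refine (hseg (pathGraphSegment a (b - a) (by omega) i) (by simp) (by simp; omega)).2.trans ?_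
    simp only [pathGraphSegment_val]
    omega

theorem nonempty_cycleGraph_embedding_of_adj {u v : V} (huv : G.Adj u v) {a b : Fin ℓ}
    (hab : (a : ℕ) ≤ b) (hu : G.Adj (f a) u) (hv : G.Adj (f b) v)
    (hu' : ∀ m : Fin ℓ, (a : ℕ) < m → (m : ℕ) ≤ b → ¬(f m = u ∨ G.Adj (f m) u))
    (hv' : ∀ m : Fin ℓ, (a : ℕ) ≤ m → (m : ℕ) < b → ¬(f m = v ∨ G.Adj (f m) v)) :
    Nonempty (cycleGraph ((b : ℕ) - a + 3) ↪g G) := by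
  have hsegu : ∀ m : Fin ℓ, (a : ℕ) ≤ m → (m : ℕ) ≤ b →
      f m ≠ u ∧ (G.Adj (f m) u ↔ (m : ℕ) = a) := by
    intro m ham hmb
    by_cases hma : (m : ℕ) = a
    · obtain rfl : m = a := Fin.ext hma
      exact ⟨hu.ne, iff_of_true hu rfl⟩
    have := hu' m (by omega) hmb
    exact ⟨fun h => this (Or.inl h), iff_of_false (fun h => this (Or.inr h)) hma⟩
  have hsegv : ∀ m : Fin ℓ, (a : ℕ) ≤ m → (m : ℕ) ≤ b →
      f m ≠ v ∧ (G.Adj (f m) v ↔ (m : ℕ) = b) := by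
    intro m ham hmb
    by_cases hmb' : (m : ℕ) = b
    · obtain rfl : m = b := Fin.ext hmb'
      exact ⟨hv.ne, iff_of_true hv rfl⟩
    have := hv' m ham (by omega)
    exact ⟨fun h => this (Or.inl h), iff_of_false (fun h => this (Or.inr h)) hmb'⟩
  let seg := pathGraphSegment (ℓ := ℓ) a (b - a) (by omega)
  have hseg_le (i : Fin (b - a + 1)) : (seg i : ℕ) ≤ b := by simp [seg]; omega
  obtain ⟨p, hp, hp_last⟩ : ∃ p : pathGraph (b - a + 1 + 1) ↪g G,
      (∀ i, p i.castSucc = f (seg i)) ∧ p (Fin.last _) = v :=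
    ⟨pathSnoc (f.comp seg) v
      (by rintro ⟨i, hi⟩; exact (hsegv (seg i) (by simp [seg]) (hseg_le i)).1 hi)
      (fun i => (hsegv (seg i) (by simp [seg]) (hseg_le i)).2.trans
        (by simp only [seg, pathGraphSegment_val]; omega)),
      fun i => pathSnoc_castSucc .., pathSnoc_last ..⟩
  refine nonempty_cycleGraph_embedding_of_pathGraph p (w := u) ?_ fun i => ?_
  · rintro ⟨i, hi⟩
    induction i using Fin.lastCases with
    | last => exact huv.ne (hp_last ▸ hi).symm
    | cast i => exact (hsegu (seg i) (by simp [seg]) (hseg_le i)).1 (hp i ▸ hi)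
  · induction i using Fin.lastCases with
    | last => simpa [hp_last] using huv.symm
    | cast i =>
      rw [hp]
      refine (hsegu (seg i) (by simp [seg]) (hseg_le i)).2.trans ?_
      simp only [seg, pathGraphSegment_val, Fin.val_castSucc]
      omega

end CyclesAlongPath

section ClosedNeighbourhoods

variable {G : SimpleGraph V}

theorem mem_closedNbhdSet_iff {X : Set V} {v : V} :
    v ∈ closedNbhdSet G X ↔ ∃ x ∈ X, x = v ∨ G.Adj x v := by
  simp only [closedNbhdSet, nbhdSet, Set.mem_union, Set.mem_ofPred_eq]
  constructor
  · rintro (hv | ⟨x, hx, hxv⟩)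
    exacts [⟨v, hv, Or.inl rfl⟩, ⟨x, hx, Or.inr hxv⟩]
  · rintro ⟨x, hx, rfl | hxv⟩
    exacts [Or.inl hx, Or.inr ⟨x, hx, hxv⟩]

theorem closedNbhdSet_mono {X Y : Set V} (h : X ⊆ Y) : closedNbhdSet G X ⊆ closedNbhdSet G Y :=
  Set.union_subset_union h fun _ ⟨x, hx, hxv⟩ => ⟨x, h hx, hxv⟩

theorem indepNumOn_le {s : Set V} {n : ℕ}
    (h : ∀ t : Finset V, ↑t ⊆ s → IsIndepSet G ↑t → t.card ≤ n) : indepNumOn G s ≤ n :=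
  csSup_le' fun _ ⟨t, hts, ht, htn⟩ => htn ▸ h t hts ht

theorem card_lt_of_isIndepSet_of_subset_neighborSet {d : ℕ} (hfree : Free (star d) G) {x : V}
    {t : Finset V} (ht : IsIndepSet G ↑t) (htx : ↑t ⊆ G.neighborSet x) : t.card < d := by
  by_contra! hdt
  let e : Fin d ↪ t := (Fin.castLEEmb hdt).trans t.equivFin.symm.toEmbedding
  have hx (k : Fin d) : G.Adj x (e k) := htx (e k).2
  refine hfree.false ⟨⟨Sum.elim (fun _ => x) (fun k => (e k : V)),
    Function.injective_of_subsingleton _ |>.sumElim (Subtype.val_injective.comp e.injective)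
      fun _ k => (hx k).ne⟩, ?_⟩
  rintro (i | k) (i' | k') <;>
    simp only [Function.Embedding.coeFn_mk, Sum.elim_inl, Sum.elim_inr]
  · simp [star]
  · simpa [star] using hx k'
  · simpa [star] using (hx k).symm
  · suffices ¬G.Adj (e k) (e k') by simpa [star]
    by_cases hkk : k = k'
    · exact hkk ▸ G.irrefl
    · exact ht (e k).2 (e k').2 (by simpa using e.injective.ne hkk)

theorem card_le_of_isIndepSet_of_subset_closedNbhdSet_singleton {d : ℕ} (hd : 2 ≤ d)
    (hfree : Free (star d) G) {x : V} {t : Finset V} (ht : IsIndepSet G ↑t)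
    (htx : ↑t ⊆ closedNbhdSet G {x}) : t.card ≤ d - 1 := by
  by_cases hxt : x ∈ t
  · -- every other member of `t` would be a neighbour of `x`
    have : t ⊆ {x} := fun y hy => by
      obtain ⟨_, rfl, rfl | hxy⟩ := mem_closedNbhdSet_iff.1 (htx hy)
      · exact Finset.mem_singleton_self _
      · exact absurd hxy (ht hxt hy hxy.ne)
    have := Finset.card_le_card this
    simp only [Finset.card_singleton] at this
    omega
  · have : ↑t ⊆ G.neighborSet x := fun y hy => by
      obtain ⟨_, rfl, rfl | hxy⟩ := mem_closedNbhdSet_iff.1 (htx hy)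
      exacts [absurd hy hxt, hxy]
    have := card_lt_of_isIndepSet_of_subset_neighborSet hfree ht this
    omega

theorem card_le_of_isIndepSet_of_subset_closedNbhdSet {d : ℕ} (hd : 2 ≤ d)
    (hfree : Free (star d) G) {X t : Finset V} (ht : IsIndepSet G ↑t)
    (htX : ↑t ⊆ closedNbhdSet G ↑X) : t.card ≤ (d - 1) * X.card := by
  classical
  have hcover : t ⊆ X.biUnion fun x => t.filter (· ∈ closedNbhdSet G {x}) := fun y hy => by
    obtain ⟨x, hx, hxy⟩ := mem_closedNbhdSet_iff.1 (htX hy)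
    exact Finset.mem_biUnion.2
      ⟨x, hx, Finset.mem_filter.2 ⟨hy, mem_closedNbhdSet_iff.2 ⟨x, rfl, hxy⟩⟩⟩
  calc t.card ≤ X.card * (d - 1) :=
        (Finset.card_le_card hcover).trans <| Finset.card_biUnion_le_card_mul _ _ _ fun x _ =>
          card_le_of_isIndepSet_of_subset_closedNbhdSet_singleton hd hfree
            (ht.mono (Finset.coe_subset.2 (Finset.filter_subset _ _))) fun y hy =>
              (Finset.mem_filter.1 hy).2
    _ = (d - 1) * X.card := mul_comm _ _

end ClosedNeighbourhoods

section Backbone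

variable {G : SimpleGraph V} {ℓ : ℕ} (f : pathGraph ℓ ↪g G) {h : ℕ}

theorem mem_closedNbhdSet_range_iff {v : V} :
    v ∈ closedNbhdSet G (Set.range f) ↔ ∃ j, f j = v ∨ G.Adj (f j) v := by
  rw [mem_closedNbhdSet_iff, Set.exists_range_iff]

theorem mem_backboneBag_iff (hh : 0 < h) {i : ℕ} {v : V} :
    v ∈ backboneBag G f h i ↔
      ∃ j : Fin ℓ, i ≤ j ∧ (j : ℕ) < i + h ∧ (f j = v ∨ G.Adj (f j) v) := by
  simp only [backboneBag, mem_closedNbhdSet_iff, Set.exists_mem_image, Set.mem_ofPred_eq,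
    and_assoc, Nat.le_sub_one_iff_lt (show 0 < i + h by omega)]

theorem backboneBag_subset_closedNbhdSet_range (i : ℕ) :
    backboneBag G f h i ⊆ closedNbhdSet G (Set.range f) :=
  closedNbhdSet_mono (Set.image_subset_range _ _)

theorem mem_backboneBag_min (hh : 0 < h) (hℓ : h ≤ ℓ) {j k : Fin ℓ} (hjk : (j : ℕ) ≤ k)
    (hkj : (k : ℕ) < j + h) {v : V} (hv : f k = v ∨ G.Adj (f k) v) :
    v ∈ backboneBag G f h (min j (ℓ - h)) :=
  (mem_backboneBag_iff f hh).2 ⟨k, by omega, by omega, hv⟩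

theorem exists_mem_backboneBag (hh : 0 < h) (hℓ : h ≤ ℓ) {v : V}
    (hv : v ∈ closedNbhdSet G (Set.range f)) : ∃ i ≤ ℓ - h, v ∈ backboneBag G f h i := by
  obtain ⟨j, hj⟩ := (mem_closedNbhdSet_range_iff f).1 hv
  exact ⟨_, min_le_right _ _, mem_backboneBag_min f hh hℓ le_rfl (by omega) hj⟩

theorem indepNumOn_backboneBag_le {d : ℕ} (hd : 2 ≤ d) (hfree : Free (star d) G) (hh : 0 < h)
    (i : ℕ) : indepNumOn G (backboneBag G f h i) ≤ (d - 1) * h := by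
  classical
  let W := Finset.univ.filter fun j : Fin ℓ => i ≤ j ∧ (j : ℕ) ≤ i + h - 1
  have hW : W.card ≤ h :=
    calc W.card ≤ (Finset.Ico i (i + h)).card :=
          Finset.card_le_card_of_injOn (fun j => (j : ℕ))
            (fun j hj => by simp [W] at hj ⊢; omega)
            Fin.val_injective.injOn
      _ = h := by simp
  refine indepNumOn_le fun t hts ht => ?_
  calc t.card ≤ (d - 1) * (W.image f).card :=
        card_le_of_isIndepSet_of_subset_closedNbhdSet hd hfree ht
          (hts.trans (by simp [backboneBag, W]))
    _ ≤ (d - 1) * h := Nat.mul_le_mul_left _ (Finset.card_image_le.trans hW)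

variable {q : ℕ} (hcyc : ∀ m : ℕ, q ≤ m → IsEmpty (cycleGraph m ↪g G))
include hcyc

theorem val_lt_add_of_closest_dominators (hh : 0 < h) (hqh : q ≤ h + 3) {u v : V}
    (huv : G.Adj u v) {a b : Fin ℓ} (hab : (a : ℕ) ≤ b) (ha : f a = u ∨ G.Adj (f a) u)
    (hb : f b = v ∨ G.Adj (f b) v)
    (hmin : ∀ a' b' : Fin ℓ, (f a' = u ∨ G.Adj (f a') u) → (f b' = v ∨ G.Adj (f b') v) →
      Nat.dist a b ≤ Nat.dist a' b') :
    (b : ℕ) < a + h := by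
  by_contra! hfar
  have hdist (a' b' : Fin ℓ) (ha' : f a' = u ∨ G.Adj (f a') u)
      (hb' : f b' = v ∨ G.Adj (f b') v) : (b : ℕ) - a ≤ (a' : ℕ) - b' + (b' - a') := by
    have := hmin a' b' ha' hb'
    unfold Nat.dist at this
    omega
  refine (hcyc ((b : ℕ) - a + 3) (by omega)).false <| Nonempty.some <|
    nonempty_cycleGraph_embedding_of_adj f huv hab ?_ ?_ ?_ ?_
  · -- if `f a = u`, then `a` dominates `v` as well
    refine ha.resolve_left fun hau => ?_
    have := hdist a a ha (Or.inr (hau ▸ huv))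
    omega
  · refine hb.resolve_left fun hbv => ?_
    have := hdist b b (Or.inr (hbv ▸ huv.symm)) hb
    omega
  · intro m ham hmb hm
    have := hdist m b hm hb
    omega
  · intro m ham hmb hm
    have := hdist a m ha hm
    omega

theorem exists_mem_backboneBag_of_adj (hh : 0 < h) (hqh : q ≤ h + 3) (hℓ : h ≤ ℓ) {u v : V}
    (hu : u ∈ closedNbhdSet G (Set.range f)) (hv : v ∈ closedNbhdSet G (Set.range f))
    (huv : G.Adj u v) : ∃ i ≤ ℓ - h, u ∈ backboneBag G f h i ∧ v ∈ backboneBag G f h i := by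
  obtain ⟨a₀, ha₀⟩ := (mem_closedNbhdSet_range_iff f).1 hu
  obtain ⟨b₀, hb₀⟩ := (mem_closedNbhdSet_range_iff f).1 hv
  obtain ⟨⟨a, b⟩, ⟨ha, hb⟩, hmin⟩ := Set.exists_min_image
    {p : Fin ℓ × Fin ℓ | (f p.1 = u ∨ G.Adj (f p.1) u) ∧ (f p.2 = v ∨ G.Adj (f p.2) v)}
    (fun p => Nat.dist p.1 p.2) (Set.toFinite _) ⟨(a₀, b₀), ha₀, hb₀⟩
  rcases le_total (a : ℕ) b with hab | hba
  · have := val_lt_add_of_closest_dominators f hcyc hh hqh huv hab ha hb fun a' b' ha' hb' =>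
      hmin (a', b') ⟨ha', hb'⟩
    exact ⟨_, min_le_right _ _, mem_backboneBag_min f hh hℓ le_rfl (by omega) ha,
      mem_backboneBag_min f hh hℓ hab this hb⟩
  · have := val_lt_add_of_closest_dominators f hcyc hh hqh huv.symm hba hb ha
      fun b' a' hb' ha' =>
        (Nat.dist_comm _ _).trans_le ((hmin (a', b') ⟨ha', hb'⟩).trans_eq (Nat.dist_comm _ _))
    exact ⟨_, min_le_right _ _, mem_backboneBag_min f hh hℓ hba this ha,
      mem_backboneBag_min f hh hℓ le_rfl (by omega) hb⟩

theorem mem_backboneBag_of_le_of_le (hh : 0 < h) (hqh : q ≤ h + 3) {v : V} {i j k : ℕ}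
    (hij : i ≤ j) (hjk : j ≤ k) (hvi : v ∈ backboneBag G f h i) (hvk : v ∈ backboneBag G f h k) :
    v ∈ backboneBag G f h j := by
  rw [mem_backboneBag_iff f hh] at hvi hvk ⊢
  obtain ⟨a₀, ha₀i, ha₀h, ha₀⟩ := hvi
  obtain ⟨b₀, hb₀k, hb₀h, hb₀⟩ := hvk
  by_contra hvj
  have hgap (m : Fin ℓ) (hjm : j ≤ m) (hmj : (m : ℕ) < j + h) : ¬(f m = v ∨ G.Adj (f m) v) :=
    fun hm => hvj ⟨m, hjm, hmj, hm⟩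
  have ha₀j : (a₀ : ℕ) < j := by
    by_contra!; exact hgap a₀ this (by omega) ha₀
  have hb₀j : j + h ≤ b₀ := by
    by_contra!; exact hgap b₀ (by omega) this hb₀
  obtain ⟨a, ⟨haj, ha⟩, hamax⟩ := Set.exists_max_image
    {m : Fin ℓ | (m : ℕ) < j ∧ (f m = v ∨ G.Adj (f m) v)} (fun m => (m : ℕ)) (Set.toFinite _)
    ⟨a₀, ha₀j, ha₀⟩
  obtain ⟨b, ⟨hbj, hb⟩, hbmin⟩ := Set.exists_min_image
    {m : Fin ℓ | j + h ≤ m ∧ (f m = v ∨ G.Adj (f m) v)} (fun m => (m : ℕ)) (Set.toFinite _)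
    ⟨b₀, hb₀j, hb₀⟩
  refine (hcyc ((b : ℕ) - a + 2) (by omega)).false <| Nonempty.some <|
    nonempty_cycleGraph_embedding_of_gap f (by omega) ha hb fun m ham hmb hm => ?_
  rcases lt_or_ge (m : ℕ) j with hmj | hjm
  · exact absurd (hamax m ⟨hmj, hm⟩) (by omega)
  rcases lt_or_ge (m : ℕ) (j + h) with hmj | hmj
  · exact hgap m hjm hmj hm
  · exact absurd (hbmin m ⟨hmj, hm⟩) (by omega)

end Backbone

theorem backbone_is_path_decomposition_general
    (d q h : ℕ) (hd : 2 ≤ d) (hq : 3 ≤ q) (hh : q - 1 ≤ h)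
    {V : Type} (G : SimpleGraph V)
    (hfree : Free (star d) G)
    (hcyc : ∀ m : ℕ, q ≤ m → IsEmpty (SimpleGraph.cycleGraph m ↪g G))
    {ℓ : ℕ} (hℓ : h ≤ ℓ) (f : SimpleGraph.pathGraph ℓ ↪g G) :
    (∀ i ≤ ℓ - h, backboneBag G f h i ⊆ closedNbhdSet G (Set.range ⇑f)) ∧
    (∀ v ∈ closedNbhdSet G (Set.range ⇑f), ∃ i ≤ ℓ - h, v ∈ backboneBag G f h i) ∧
    (∀ u v : V, u ∈ closedNbhdSet G (Set.range ⇑f) →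
      v ∈ closedNbhdSet G (Set.range ⇑f) → G.Adj u v →
      ∃ i ≤ ℓ - h, u ∈ backboneBag G f h i ∧ v ∈ backboneBag G f h i) ∧
    (∀ v : V, ∀ i j k : ℕ, i ≤ j → j ≤ k → k ≤ ℓ - h →
      v ∈ backboneBag G f h i → v ∈ backboneBag G f h k → v ∈ backboneBag G f h j) ∧
    (∀ i ≤ ℓ - h, indepNumOn G (backboneBag G f h i) ≤ (d - 1) * h) := by
  have hh₀ : 0 < h := by omega
  have hqh : q ≤ h + 3 := by omega
  exact ⟨fun i _ => backboneBag_subset_closedNbhdSet_range f i,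
    fun v hv => exists_mem_backboneBag f hh₀ hℓ hv,
    fun u v hu hv huv => exists_mem_backboneBag_of_adj f hcyc hh₀ hqh hℓ hu hv huv,
    fun v i j k hij hjk _ => mem_backboneBag_of_le_of_le f hcyc hh₀ hqh hij hjk,
    fun i _ => indepNumOn_backboneBag_le f hd hfree hh₀ i⟩

/-- Let `d ≥ 2` and `q ≥ 3` be integers, `G` a connected
`K_{1,d}`-free graph with no induced cycle of length at least `q`, `h ≥ q−1` an
integer, and `P = v_0 … v_{ℓ-1}` an induced path on `ℓ ≥ h` vertices in `G`. Then
the `h`-backbone structure `(B, β)` of `P` in `G` (with bags `β(b_i) = N[{v_i, …,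
v_{i+h-1}}]` for `0 ≤ i ≤ ℓ−h`) is a path decomposition of `G[N[V(P)]]` whose
independence number is at most `(d−1)h`. -/
theorem backbone_is_path_decomposition
    (d q h : ℕ) (hd : 2 ≤ d) (hq : 3 ≤ q) (hh : q - 1 ≤ h)
    {V : Type} [Fintype V] (G : SimpleGraph V) (hconn : G.Connected)
    (hfree : Free (star d) G)
    (hcyc : ∀ m : ℕ, q ≤ m → IsEmpty (SimpleGraph.cycleGraph m ↪g G))
    {ℓ : ℕ} (hℓ : h ≤ ℓ) (f : SimpleGraph.pathGraph ℓ ↪g G) :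
    (∀ i ≤ ℓ - h, backboneBag G f h i ⊆ closedNbhdSet G (Set.range ⇑f)) ∧
    (∀ v ∈ closedNbhdSet G (Set.range ⇑f), ∃ i ≤ ℓ - h, v ∈ backboneBag G f h i) ∧
    (∀ u v : V, u ∈ closedNbhdSet G (Set.range ⇑f) →
      v ∈ closedNbhdSet G (Set.range ⇑f) → G.Adj u v →
      ∃ i ≤ ℓ - h, u ∈ backboneBag G f h i ∧ v ∈ backboneBag G f h i) ∧
    (∀ v : V, ∀ i j k : ℕ, i ≤ j → j ≤ k → k ≤ ℓ - h →
      v ∈ backboneBag G f h i → v ∈ backboneBag G f h k → v ∈ backboneBag G f h j) ∧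
    (∀ i ≤ ℓ - h, indepNumOn G (backboneBag G f h i) ≤ (d - 1) * h) :=
  backbone_is_path_decomposition_general d q h hd hq hh G hfree hcyc hℓ f

end PaperTIN
end

section
/- Let H be a graph, let {H_j}_{j ∈ J} be a family of connected subgraphs of H, and let G be the graph with vertex set J in which two distinct vertices i and j are adjacent if and only if H_i and H_j have a vertex in common. Then tree-α(G) ≤ tw(H) + 1. -/
/-
Common definitions: tree decompositions, tree-independence number, treewidth,
independence/clique numbers, induced-subgraph freeness, and the special graphs
appearing in the paper "Treewidth versus clique number: induced minors,
distance to block graphs ... (tree-independence number)".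
-/

namespace PaperTIN

open SimpleGraph

variable {V W : Type}

/-!
Given a tree decomposition of `H`, keep its tree and replace each bag `B_t` by the set of
indices `j` such that `H_j` meets `B_t`. Since each `H_j` is connected and the nodes whose
bags contain a fixed vertex form a subtree, the nodes whose bags meet `H_j` again form a
subtree, so this is a tree decomposition of `G`. Pairwise non-adjacent indices in the new bag
at `t` have pairwise disjoint subgraphs, which therefore meet `B_t` in distinct vertices:
the new bag has independence number at most `|B_t| ≤ tw(H) + 1`.
-/

variable {J : Type}

lemma indepNumOn_le_ncard_of_exists {G : SimpleGraph J} {s : Set J} {B : Set W}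
    (hB : B.Finite) (R : J → W → Prop) (hR : ∀ j ∈ s, ∃ w ∈ B, R j w)
    (hadj : ∀ i j w, i ≠ j → R i w → R j w → G.Adj i j) :
    indepNumOn G s ≤ B.ncard := by
  refine csSup_le' ?_
  rintro _ ⟨t, hts, hind, rfl⟩
  choose f hfB hfR using fun j : t => hR j (hts j.2)
  have : Finite B := hB
  have hf : Function.Injective fun j => (⟨f j, hfB j⟩ : B) := by
    intro i j hij
    by_contra hne
    have hne' : (i : J) ≠ j := fun h => hne (Subtype.ext h)
    have hfij : f i = f j := congrArg Subtype.val hij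
    exact hind i.2 j.2 hne' (hadj i j (f i) hne' (hfR i) (hfij ▸ hfR j))
  calc t.card = Nat.card t := (Nat.card_eq_finsetCard t).symm
    _ ≤ Nat.card B := Nat.card_le_card_of_injective _ hf
    _ = B.ncard := Nat.card_coe_set_eq B

namespace TreeDecomp

def trivial (H : SimpleGraph W) : TreeDecomp H where
  ι := Unit
  tree := ⊥
  isTree := .of_subsingleton
  bag _ := Set.univ
  bag_vert _ := ⟨(), Set.mem_univ _⟩
  bag_edge _ _ _ := ⟨(), Set.mem_univ _, Set.mem_univ _⟩
  bag_conn v := by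
    have : Nonempty {t : Unit | v ∈ (Set.univ : Set W)} := ⟨⟨(), Set.mem_univ v⟩⟩
    exact .of_subsingleton

variable {H : SimpleGraph W} (D : TreeDecomp H)

lemma ncard_bag_le_width_add_one [Finite W] (t : D.ι) : (D.bag t).ncard ≤ D.width + 1 := by
  have hbdd : BddAbove {n | ∃ t : D.ι, n = (D.bag t).ncard} :=
    ⟨Nat.card W, by rintro _ ⟨t', rfl⟩; exact Set.ncard_le_card _⟩
  have := le_csSup hbdd ⟨t, rfl⟩
  unfold width
  omega

lemma alpha_le {n : ℕ} (h : ∀ t, indepNumOn H (D.bag t) ≤ n) : D.alpha ≤ n :=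
  csSup_le' <| by rintro _ ⟨t, rfl⟩; exact h t

def nodesMeeting (s : Set W) : Set D.ι := {t | ∃ w ∈ s, w ∈ D.bag t}

lemma mem_nodesMeeting_of_mem_bag {s : Set W} {w : W} (hw : w ∈ s) {t : D.ι}
    (ht : w ∈ D.bag t) :
    t ∈ D.nodesMeeting s :=
  ⟨w, hw, ht⟩

lemma reachable_induce_nodesMeeting_of_mem_bag {s : Set W} {w : W} (hw : w ∈ s) {t t' : D.ι}
    (ht : w ∈ D.bag t) (ht' : w ∈ D.bag t') :
    (D.tree.induce (D.nodesMeeting s)).Reachable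
      ⟨t, D.mem_nodesMeeting_of_mem_bag hw ht⟩ ⟨t', D.mem_nodesMeeting_of_mem_bag hw ht'⟩ :=
  ((D.bag_conn w).preconnected ⟨t, ht⟩ ⟨t', ht'⟩).map
    (D.tree.induceHomOfLE fun _ => D.mem_nodesMeeting_of_mem_bag hw).toHom

lemma connected_induce_nodesMeeting {K : H.Subgraph} (hK : K.Connected) :
    (D.tree.induce (D.nodesMeeting K.verts)).Connected := by
  have walk_reachable : ∀ (u v : K.verts) (p : K.coe.Walk u v) (t t' : D.ι)
      (ht : (u : W) ∈ D.bag t) (ht' : (v : W) ∈ D.bag t'),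
      (D.tree.induce (D.nodesMeeting K.verts)).Reachable ⟨t, D.mem_nodesMeeting_of_mem_bag u.2 ht⟩
        ⟨t', D.mem_nodesMeeting_of_mem_bag v.2 ht'⟩ := by
    intro u v p
    induction p with
    | nil =>
      exact fun t t' ht ht' => D.reachable_induce_nodesMeeting_of_mem_bag (Subtype.prop _) ht ht'
    | @cons u _ _ hux _ ih =>
      intro t t' ht ht'
      obtain ⟨s, hus, hxs⟩ := D.bag_edge (K.coe_adj_sub _ _ hux)
      exact (D.reachable_induce_nodesMeeting_of_mem_bag u.2 ht hus).trans (ih s t' hxs ht')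
  obtain ⟨w, hw⟩ := hK.nonempty
  obtain ⟨t, ht⟩ := D.bag_vert w
  have : Nonempty (D.nodesMeeting K.verts) := ⟨⟨t, D.mem_nodesMeeting_of_mem_bag hw ht⟩⟩
  refine .mk fun ⟨t, htK⟩ ⟨t', ht'K⟩ => ?_
  obtain ⟨u, hu, ht⟩ := htK
  obtain ⟨v, hv, ht'⟩ := ht'K
  obtain ⟨p⟩ := hK.coe.preconnected ⟨u, hu⟩ ⟨v, hv⟩
  exact walk_reachable _ _ p t t' ht ht'

def ofConnectedSubgraphs {G : SimpleGraph J} (K : J → H.Subgraph) (hK : ∀ j, (K j).Connected)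
    (hG : ∀ i j, G.Adj i j → ((K i).verts ∩ (K j).verts).Nonempty) : TreeDecomp G where
  ι := D.ι
  tree := D.tree
  isTree := D.isTree
  bag t := {j | t ∈ D.nodesMeeting (K j).verts}
  bag_vert j := by
    obtain ⟨w, hw⟩ := (hK j).nonempty
    obtain ⟨t, ht⟩ := D.bag_vert w
    exact ⟨t, D.mem_nodesMeeting_of_mem_bag hw ht⟩
  bag_edge i j hij := by
    obtain ⟨w, hwi, hwj⟩ := hG i j hij
    obtain ⟨t, ht⟩ := D.bag_vert w
    exact ⟨t, D.mem_nodesMeeting_of_mem_bag hwi ht, D.mem_nodesMeeting_of_mem_bag hwj ht⟩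
  bag_conn j := D.connected_induce_nodesMeeting (hK j)

lemma alpha_ofConnectedSubgraphs_le [Finite W] {G : SimpleGraph J} (K : J → H.Subgraph)
    (hK : ∀ j, (K j).Connected)
    (hG : ∀ i j, G.Adj i j ↔ i ≠ j ∧ ((K i).verts ∩ (K j).verts).Nonempty) :
    (D.ofConnectedSubgraphs K hK fun i j h => ((hG i j).1 h).2).alpha ≤ D.width + 1 :=
  alpha_le _ fun t => by
    refine (indepNumOn_le_ncard_of_exists (Set.toFinite _) (fun j w => w ∈ (K j).verts) ?_
      fun i j w hij hi hj => (hG i j).2 ⟨hij, w, hi, hj⟩).trans (D.ncard_bag_le_width_add_one t)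
    rintro j ⟨w, hw, hwt⟩
    exact ⟨w, hwt, hw⟩

end TreeDecomp

lemma treeIndepNum_le_alpha {G : SimpleGraph J} (D : TreeDecomp G) : treeIndepNum G ≤ D.alpha :=
  Nat.sInf_le ⟨D, rfl⟩

lemma exists_width_eq_treewidth (H : SimpleGraph W) : ∃ D : TreeDecomp H, D.width = treewidth H :=
  Nat.sInf_mem (s := {n | ∃ D : TreeDecomp H, D.width = n}) ⟨_, TreeDecomp.trivial H, rfl⟩

theorem treeIndepNum_intersectionGraph_le_treewidth_add_one_general
    {W J : Type} [Fintype W] (H : SimpleGraph W)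
    (Hj : J → H.Subgraph) (hconn : ∀ j : J, (Hj j).Connected)
    (G : SimpleGraph J)
    (hG : ∀ i j : J, G.Adj i j ↔ i ≠ j ∧ ((Hj i).verts ∩ (Hj j).verts).Nonempty) :
    treeIndepNum G ≤ treewidth H + 1 := by
  obtain ⟨D, hD⟩ := exists_width_eq_treewidth H
  calc treeIndepNum G ≤ _ := treeIndepNum_le_alpha (D.ofConnectedSubgraphs Hj hconn _)
    _ ≤ D.width + 1 := D.alpha_ofConnectedSubgraphs_le Hj hconn hG
    _ = treewidth H + 1 := by rw [hD]

/-- Let `H` be a graph, `{H_j}_{j ∈ J}` a family of connected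
subgraphs of `H`, and `G` the graph on vertex set `J` where distinct `i, j` are
adjacent iff `H_i` and `H_j` share a vertex. Then `tree-α(G) ≤ tw(H) + 1`. -/
theorem treeIndepNum_intersectionGraph_le_treewidth_add_one
    {W J : Type} [Fintype W] [Fintype J] (H : SimpleGraph W)
    (Hj : J → H.Subgraph) (hconn : ∀ j : J, (Hj j).Connected)
    (G : SimpleGraph J)
    (hG : ∀ i j : J, G.Adj i j ↔ i ≠ j ∧ ((Hj i).verts ∩ (Hj j).verts).Nonempty) :
    treeIndepNum G ≤ treewidth H + 1 :=
  treeIndepNum_intersectionGraph_le_treewidth_add_one_general H Hj hconn G hG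

end PaperTIN
end
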